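/- arXiv:nlin/0512046 — 6 statements merged into one kernel-verified Lean document; each statement's English description precedes it below -/
import Mathlib

section
/- For every v ∈ ℝ^{N−1}, letting B := [ω_v, E], one has [B, E] = κ²·ω_v, and consequently the iterated adjoint action satisfies [B, [B, E]] = −κ²·[ω_v, [ω_v, E]]; that is, ad([ω_v, E])²(E) = χ·[ω_v, [ω_v, E]] with χ = −κ². (This identifies the scalar curvature factor χ = 2N/(1−N) in the non-stretching mKdV map equation on SU(N)/SO(N).) -/
open Matrix

/-- For `v ∈ ℝ^{N−1}` (with `N = n+1`), the `N×N` skew-symmetric matrix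
`ω_v = [[0, v], [−vᵀ, 0]]`. -/
def omegaMat {n : ℕ} (v : Fin n → ℝ) : Matrix (Fin (n + 1)) (Fin (n + 1)) ℝ :=
  Matrix.of (Fin.cons (Fin.cons 0 v) (fun i' => Fin.cons (-(v i')) 0))

/-- The adapted frame element `E = (κ/N)·diag(1−N, 1, …, 1)`, `N = n+1`. -/
noncomputable def Emat (n : ℕ) (κ : ℝ) : Matrix (Fin (n + 1)) (Fin (n + 1)) ℝ :=
  (κ / ((n : ℝ) + 1)) • Matrix.diagonal (Fin.cons (1 - ((n : ℝ) + 1)) (fun _ => 1))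

/-- The Lie bracket (commutator) of square matrices. -/
def lieB {m : Type*} [Fintype m] (X Y : Matrix m m ℝ) : Matrix m m ℝ :=
  X * Y - Y * X

/-- The symmetric companion of `ω_v`: `[[0, v], [vᵀ, 0]]`. -/
def symMat {n : ℕ} (v : Fin n → ℝ) : Matrix (Fin (n + 1)) (Fin (n + 1)) ℝ :=
  Matrix.of (Fin.cons (Fin.cons 0 v) (fun i' => Fin.cons (v i') 0))

lemma lieB_Emat {n : ℕ} (κ : ℝ) (X : Matrix (Fin (n + 1)) (Fin (n + 1)) ℝ) :
    lieB X (Emat n κ) = Matrix.of (fun i j =>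
      (κ / ((n : ℝ) + 1)) * X i j *
        (((Fin.cons (1 - ((n : ℝ) + 1)) (fun _ => (1:ℝ)) : Fin (n+1) → ℝ) j) -
         ((Fin.cons (1 - ((n : ℝ) + 1)) (fun _ => (1:ℝ)) : Fin (n+1) → ℝ) i))) := by
  ext i j
  simp [lieB, Emat, Matrix.mul_smul, Matrix.smul_mul, Matrix.mul_diagonal,
    Matrix.diagonal_mul]
  ring

lemma lieB_smul_left {m : Type*} [Fintype m] (c : ℝ) (X Y : Matrix m m ℝ) :
    lieB (c • X) Y = c • lieB X Y := by
  simp [lieB, Matrix.smul_mul, Matrix.mul_smul, smul_sub]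

lemma lieB_smul_right {m : Type*} [Fintype m] (c : ℝ) (X Y : Matrix m m ℝ) :
    lieB X (c • Y) = c • lieB X Y := by
  simp [lieB, Matrix.smul_mul, Matrix.mul_smul, smul_sub]

lemma lieB_anti {m : Type*} [Fintype m] (X Y : Matrix m m ℝ) :
    lieB X Y = -lieB Y X := by
  simp [lieB, neg_sub]

lemma omega_bracket {n : ℕ} (κ : ℝ) (v : Fin n → ℝ) :
    lieB (omegaMat v) (Emat n κ) = κ • symMat v := by
  have hN : ((n : ℝ) + 1) ≠ 0 := by positivity
  have hone : (κ / ((n:ℝ)+1)) * ((n:ℝ)+1) = κ := div_mul_cancel₀ κ hN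
  rw [lieB_Emat]
  ext i j
  refine Fin.cases ?_ ?_ i <;> [skip; intro i'] <;>
    refine Fin.cases ?_ ?_ j <;> [skip; intro j'; skip; intro j'] <;>
    simp [omegaMat, symMat, Fin.cons_zero, Fin.cons_succ]
  · linear_combination (v j') * hone
  · linear_combination (v i') * hone

lemma sym_bracket {n : ℕ} (κ : ℝ) (v : Fin n → ℝ) :
    lieB (symMat v) (Emat n κ) = κ • omegaMat v := by
  have hN : ((n : ℝ) + 1) ≠ 0 := by positivity
  have hone : (κ / ((n:ℝ)+1)) * ((n:ℝ)+1) = κ := div_mul_cancel₀ κ hN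
  rw [lieB_Emat]
  ext i j
  refine Fin.cases ?_ ?_ i <;> [skip; intro i'] <;>
    refine Fin.cases ?_ ?_ j <;> [skip; intro j'; skip; intro j'] <;>
    simp [omegaMat, symMat, Fin.cons_zero, Fin.cons_succ]
  · linear_combination (v j') * hone
  · linear_combination (-(v i')) * hone

/-- for every `v ∈ ℝ^{N−1}` (here `N = n+1 ≥ 2`, `κ = √(2N/(N−1))`), with
`B = [ω_v, E]` one has `[B, E] = κ²·ω_v`, and consequently
`[B, [B, E]] = −κ²·[ω_v, [ω_v, E]]`, i.e. `ad([ω_v, E])²(E) = χ·[ω_v, [ω_v, E]]`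
with `χ = −κ²`. -/
theorem statement_8 (n : ℕ) (hn : 1 ≤ n) (κ : ℝ)
    (hκ : κ = Real.sqrt (2 * ((n : ℝ) + 1) / (((n : ℝ) + 1) - 1))) (v : Fin n → ℝ)
    (B : Matrix (Fin (n + 1)) (Fin (n + 1)) ℝ) (hB : B = lieB (omegaMat v) (Emat n κ)) :
    lieB B (Emat n κ) = (κ ^ 2) • omegaMat v ∧
    lieB B (lieB B (Emat n κ)) = (-(κ ^ 2)) • lieB (omegaMat v) (lieB (omegaMat v) (Emat n κ)) := by
  have hBS : B = κ • symMat v := by rw [hB, omega_bracket]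
  have h1 : lieB B (Emat n κ) = (κ ^ 2) • omegaMat v := by
    rw [hBS, lieB_smul_left, sym_bracket, smul_smul]
    ring_nf
  refine ⟨h1, ?_⟩
  rw [h1, lieB_smul_right, ← hB, lieB_anti (omegaMat v) B]
  simp
end

section
/- Let v, ϖ, h⊥ : ℝ² → ℝ^{N−1} and h∥ : ℝ² → ℝ be differentiable, and let Θ : ℝ² → (N−1)×(N−1) skew-symmetric real matrices be differentiable. Define the (N+1)×(N+1) matrix-valued functions ω_x := H_{V_v}, ω_t := H_{W}, where W is the N×N skew matrix [[0, ϖ], [−ϖᵀ, Θ]], e_x := A_{(1,0,…,0)}, and e_t := A_{(h∥, h⊥)}. Then the zero-curvature (Cartan curvature) equation ∂_x ω_t − ∂_t ω_x + [ω_x, ω_t] = −[e_x, e_t] holds identically on ℝ² if and only if the two component equations ∂_t v − ∂_x ϖ − vΘ = −h⊥ and ∂_x Θ = v⊗ϖ − ϖ⊗v hold identically, where vΘ denotes the row vector (vΘ)_j = Σ_i v_i Θ_{ij}. -/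
open Matrix

/-- The `(N+1)×(N+1)` skew-symmetric matrix `[[0, p], [-pᵀ, 0]]` for a row vector `p ∈ ℝᴺ`.
For `v ∈ ℝ^{N−1}`, `Amat v` is also the `N×N` matrix `V_v = [[0, v], [−vᵀ, 0]]`. -/
def Amat {N : ℕ} (p : Fin N → ℝ) : Matrix (Fin (N + 1)) (Fin (N + 1)) ℝ :=
  Matrix.of (Fin.cons (Fin.cons 0 p) (fun i' => Fin.cons (-(p i')) 0))

/-- The `(N+1)×(N+1)` block-diagonal matrix `diag(0, S)` for an `N×N` matrix `S`. -/
def Hmat {N : ℕ} (S : Matrix (Fin N) (Fin N) ℝ) : Matrix (Fin (N + 1)) (Fin (N + 1)) ℝ :=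
  Matrix.of (Fin.cons 0 (fun i' => Fin.cons 0 (S i')))

/-- The `N×N` skew matrix `W = [[0, ϖ], [−ϖᵀ, Θ]]` for `ϖ ∈ ℝ^{N−1}`, `Θ ∈ 𝔰𝔬(N−1)`. -/
def Wmat {n : ℕ} (ϖ : Fin n → ℝ) (Θ : Matrix (Fin n) (Fin n) ℝ) :
    Matrix (Fin (n + 1)) (Fin (n + 1)) ℝ :=
  Matrix.of (Fin.cons (Fin.cons 0 ϖ) (fun i' => Fin.cons (-(ϖ i')) (Θ i')))

/-- Entrywise partial derivative in the second (`x`) variable of a matrix-valued function. -/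
noncomputable def pdX {m : Type*} (F : ℝ → ℝ → Matrix m m ℝ) (t x : ℝ) : Matrix m m ℝ :=
  Matrix.of fun i j => deriv (fun y => F t y i j) x

/-- Entrywise partial derivative in the first (`t`) variable of a matrix-valued function. -/
noncomputable def pdT {m : Type*} (F : ℝ → ℝ → Matrix m m ℝ) (t x : ℝ) : Matrix m m ℝ :=
  Matrix.of fun i j => deriv (fun s => F s x i j) t

/-- with `ω_x = H_{V_v}`, `ω_t = H_W` (`W = [[0,ϖ],[−ϖᵀ,Θ]]`),
`e_x = A_{(1,0,…,0)}`, `e_t = A_{(h∥,h⊥)}` (here `N = n+1 ≥ 2`), the zero-curvature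
equation `∂_x ω_t − ∂_t ω_x + [ω_x, ω_t] = −[e_x, e_t]` holds identically on `ℝ²`
iff the component equations `∂_t v − ∂_x ϖ − vΘ = −h⊥` and `∂_x Θ = v⊗ϖ − ϖ⊗v`
hold identically. -/
theorem statement_9 (n : ℕ) (hn : 1 ≤ n)
    (v ϖ hperp : ℝ → ℝ → Fin n → ℝ) (hpar : ℝ → ℝ → ℝ)
    (Θ : ℝ → ℝ → Matrix (Fin n) (Fin n) ℝ)
    (hΘskew : ∀ t x, (Θ t x)ᵀ = -(Θ t x))
    (hvdiff : ∀ i, Differentiable ℝ (fun p : ℝ × ℝ => v p.1 p.2 i))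
    (hϖdiff : ∀ i, Differentiable ℝ (fun p : ℝ × ℝ => ϖ p.1 p.2 i))
    (hhperpdiff : ∀ i, Differentiable ℝ (fun p : ℝ × ℝ => hperp p.1 p.2 i))
    (hhpardiff : Differentiable ℝ (fun p : ℝ × ℝ => hpar p.1 p.2))
    (hΘdiff : ∀ i j, Differentiable ℝ (fun p : ℝ × ℝ => Θ p.1 p.2 i j)) :
    (∀ t x : ℝ,
        pdX (fun s y => Hmat (Wmat (ϖ s y) (Θ s y))) t x
          - pdT (fun s y => Hmat (Amat (v s y))) t x
          + lieB (Hmat (Amat (v t x))) (Hmat (Wmat (ϖ t x) (Θ t x)))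
        = -(lieB (Amat (Fin.cons 1 0)) (Amat (Fin.cons (hpar t x) (hperp t x)))))
    ↔ (∀ t x : ℝ,
        (∀ i, deriv (fun s => v s x i) t - deriv (fun y => ϖ t y i) x
            - Matrix.vecMul (v t x) (Θ t x) i = -(hperp t x i)) ∧
        (Matrix.of fun i j => deriv (fun y => Θ t y i j) x)
          = vecMulVec (v t x) (ϖ t x) - vecMulVec (ϖ t x) (v t x)) := by

  have hsk : ∀ t x (a b : Fin n), Θ t x a b = -(Θ t x b a) := by
    intro t x a b
    have h := congrFun (congrFun (hΘskew t x) b) a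
    simpa [Matrix.transpose_apply, Matrix.neg_apply] using h
  constructor
  · intro H t x
    have h := Matrix.ext_iff.mpr (H t x)
    refine ⟨fun i => ?_, ?_⟩
    · have h1 := h (Fin.succ 0) (Fin.succ (Fin.succ i))
      simp [pdX, pdT, lieB, Hmat, Wmat, Amat, Matrix.mul_apply, Fin.sum_univ_succ,
        Matrix.vecMul, dotProduct] at h1 ⊢
      linarith
    · ext i j
      have h2 := h (Fin.succ (Fin.succ i)) (Fin.succ (Fin.succ j))
      simp [pdX, pdT, lieB, Hmat, Wmat, Amat, Matrix.mul_apply, Fin.sum_univ_succ,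
        vecMulVec_apply] at h2 ⊢
      linarith
  · intro H t x
    obtain ⟨h1, h2⟩ := H t x
    have h2' : ∀ i j, deriv (fun y => Θ t y i j) x
        = v t x i * ϖ t x j - ϖ t x i * v t x j := by
      intro i j
      have h := congrFun (congrFun h2 i) j
      simpa [vecMulVec_apply, Matrix.sub_apply] using h
    have h1' : ∀ i, deriv (fun s => v s x i) t - deriv (fun y => ϖ t y i) x
        - ∑ k, v t x k * Θ t x k i = -(hperp t x i) := by
      intro i
      have h := h1 i
      simpa [Matrix.vecMul, dotProduct] using h
    ext i j
    induction i using Fin.cases with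
    | zero =>
      induction j using Fin.cases <;>
        simp [pdX, pdT, lieB, Hmat, Wmat, Amat, Matrix.mul_apply, Fin.sum_univ_succ]
    | succ i =>
      induction j using Fin.cases with
      | zero =>
        simp [pdX, pdT, lieB, Hmat, Wmat, Amat, Matrix.mul_apply, Fin.sum_univ_succ]
      | succ j =>
        induction i using Fin.cases with
        | zero =>
          induction j using Fin.cases with
          | zero =>
            simp [pdX, pdT, lieB, Hmat, Wmat, Amat, Matrix.mul_apply, Fin.sum_univ_succ,
              mul_comm]
          | succ j =>
            have := h1' j
            simp [pdX, pdT, lieB, Hmat, Wmat, Amat, Matrix.mul_apply, Fin.sum_univ_succ]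
            linarith
        | succ i =>
          induction j using Fin.cases with
          | zero =>
            have key : ∑ k, Θ t x i k * v t x k = -∑ k, v t x k * Θ t x k i := by
              rw [← Finset.sum_neg_distrib]
              exact Finset.sum_congr rfl fun k _ => by rw [hsk t x i k]; ring
            have := h1' i
            simp [pdX, pdT, lieB, Hmat, Wmat, Amat, Matrix.mul_apply, Fin.sum_univ_succ]
            linarith
          | succ j =>
            have := h2' i j
            simp [pdX, pdT, lieB, Hmat, Wmat, Amat, Matrix.mul_apply, Fin.sum_univ_succ]
            linarith
end

section
/- Let v, ϖ, h⊥ : ℝ² → ℝ^{N−1} and h∥ : ℝ² → ℝ be differentiable, and let Θ : ℝ² → (N−1)×(N−1) skew-symmetric real matrices be differentiable. Define ω_x := H_{V_v}, ω_t := H_{W} with W = [[0, ϖ], [−ϖᵀ, Θ]], e_x := A_{(1,0,…,0)} (constant in t and x), and e_t := A_{(h∥, h⊥)}. Then the zero-torsion (Cartan structure) equation ∂_x e_t − ∂_t e_x + [ω_x, e_t] − [ω_t, e_x] = 0 holds identically on ℝ² if and only if the two component equations ∂_x h∥ + v · h⊥ = 0 and ϖ − h∥ v + ∂_x h⊥ =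 0 hold identically. -/
open Matrix

lemma key_statement_10 (n : ℕ) (v ϖ hperp : ℝ → ℝ → Fin n → ℝ) (hpar : ℝ → ℝ → ℝ)
    (Θ : ℝ → ℝ → Matrix (Fin n) (Fin n) ℝ) (t x : ℝ) :
    pdX (fun s y => Amat (Fin.cons (hpar s y) (hperp s y))) t x
      - pdT (fun _ _ => Amat (Fin.cons 1 0)) t x
      + lieB (Hmat (Amat (v t x))) (Amat (Fin.cons (hpar t x) (hperp t x)))
      - lieB (Hmat (Wmat (ϖ t x) (Θ t x))) (Amat (Fin.cons 1 0))
    = Amat (Fin.cons (deriv (fun y => hpar t y) x + v t x ⬝ᵥ hperp t x)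
        (fun i => ϖ t x i - hpar t x * v t x i + deriv (fun y => hperp t y i) x)) := by
  ext i j
  unfold pdX pdT lieB Amat Hmat Wmat
  simp only [Matrix.sub_apply, Matrix.add_apply, Matrix.mul_apply, Matrix.of_apply]
  refine Fin.cases ?_ (fun i' => ?_) i <;> refine Fin.cases ?_ (fun j' => ?_) j
  · simp [Fin.sum_univ_succ]
  · refine Fin.cases ?_ (fun k => ?_) j' <;>
      simp [Fin.sum_univ_succ, dotProduct, mul_comm] <;> ring
  · refine Fin.cases ?_ (fun k => ?_) i' <;>
      simp [Fin.sum_univ_succ, dotProduct, mul_comm] <;> ring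
  · simp [Fin.sum_univ_succ]

lemma Amat_eq_zero_iff {N : ℕ} (p : Fin N → ℝ) : Amat p = 0 ↔ p = 0 := by
  constructor
  · intro h
    funext j
    have := congrFun (congrFun h 0) j.succ
    simpa [Amat] using this
  · rintro rfl
    ext i j
    refine Fin.cases ?_ (fun i' => ?_) i <;> refine Fin.cases ?_ (fun j' => ?_) j <;>
      simp [Amat]

/-- with `ω_x = H_{V_v}`, `ω_t = H_W` (`W = [[0,ϖ],[−ϖᵀ,Θ]]`),
`e_x = A_{(1,0,…,0)}` (constant), `e_t = A_{(h∥,h⊥)}` (here `N = n+1 ≥ 2`), the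
zero-torsion equation `∂_x e_t − ∂_t e_x + [ω_x, e_t] − [ω_t, e_x] = 0` holds
identically on `ℝ²` iff the component equations `∂_x h∥ + v · h⊥ = 0` and
`ϖ − h∥ v + ∂_x h⊥ = 0` hold identically. -/
theorem statement_10 (n : ℕ) (hn : 1 ≤ n)
    (v ϖ hperp : ℝ → ℝ → Fin n → ℝ) (hpar : ℝ → ℝ → ℝ)
    (Θ : ℝ → ℝ → Matrix (Fin n) (Fin n) ℝ)
    (hΘskew : ∀ t x, (Θ t x)ᵀ = -(Θ t x))
    (hvdiff : ∀ i, Differentiable ℝ (fun p : ℝ × ℝ => v p.1 p.2 i))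
    (hϖdiff : ∀ i, Differentiable ℝ (fun p : ℝ × ℝ => ϖ p.1 p.2 i))
    (hhperpdiff : ∀ i, Differentiable ℝ (fun p : ℝ × ℝ => hperp p.1 p.2 i))
    (hhpardiff : Differentiable ℝ (fun p : ℝ × ℝ => hpar p.1 p.2))
    (hΘdiff : ∀ i j, Differentiable ℝ (fun p : ℝ × ℝ => Θ p.1 p.2 i j)) :
    (∀ t x : ℝ,
        pdX (fun s y => Amat (Fin.cons (hpar s y) (hperp s y))) t x
          - pdT (fun _ _ => Amat (Fin.cons 1 0)) t x
          + lieB (Hmat (Amat (v t x))) (Amat (Fin.cons (hpar t x) (hperp t x)))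
          - lieB (Hmat (Wmat (ϖ t x) (Θ t x))) (Amat (Fin.cons 1 0)) = 0)
    ↔ (∀ t x : ℝ,
        (deriv (fun y => hpar t y) x + v t x ⬝ᵥ hperp t x = 0) ∧
        (∀ i, ϖ t x i - hpar t x * v t x i + deriv (fun y => hperp t y i) x = 0)) := by
  constructor
  · intro h t x
    have h0 := h t x
    rw [key_statement_10] at h0
    rw [Amat_eq_zero_iff] at h0
    constructor
    · simpa using congrFun h0 0
    · intro i; simpa using congrFun h0 i.succ
  · intro h t x
    rw [key_statement_10, Amat_eq_zero_iff]
    obtain ⟨h1, h2⟩ := h t x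
    funext j
    refine Fin.cases ?_ (fun k => ?_) j
    · simpa using h1
    · simpa using h2 k
end

section
/- Let v, ϖ, h⊥ : ℝ² → ℝ^{N−1} and h∥ : ℝ² → ℝ be differentiable, let Θ : ℝ² → (N−1)×(N−1) skew-symmetric real matrices and H : ℝ² → (N−1)×(N−1) symmetric trace-free real matrices be differentiable. Define the N×N matrix-valued functions ω_x := ω_v, ω_t := [[0, ϖ], [−ϖᵀ, Θ]], and e_t := κ·[[(1/N − 1)h∥, h⊥], [h⊥ᵀ, H + (h∥/N)·1]], where 1 is the (N−1)×(N−1) identity, and let E be constant. Then the zero-torsion equation ∂_x e_t − ∂_t E + [ω_x, e_t] − [ω_t, E] = 0 holds identically on ℝ² if and only if the three component equations 0 = 2κ⁻²∂_x h∥ − 2 v · h⊥, 0 = ϖ − h∥ v − ∂_x h⊥ − vH, and 0 = −∂_x(H + (h∥/N)·1) + v⊗h⊥ + h⊥⊗v hold identically, where vH denotes the row vector (vH)_j = Σ_i v_i H_{ij}. (In particular, Θ does not enter.) -/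
/-! Work entrywise in the block decomposition `N = 1 + (N−1)`. Since `E = (κ/N)·1 − κ·E₀₀`,
the bracket `[ω_t, E] = κ[E₀₀, ω_t] = κ·[[0, ϖ], [ϖᵀ, 0]]` only sees the first row and column of
`ω_t`, so `Θ` drops out. Each block of the torsion is then `−κ` times one of the component
equations (the two off-diagonal blocks give the same one because `H` is symmetric), where
`κ² = 2N/(N−1)` turns the coefficient `κ(1/N − 1)` of `∂ₓh∥` into `−κ·2κ⁻²`. As `κ ≠ 0`, the
torsion vanishes iff the component equations hold. -/

open Matrix

/-- The flow-direction frame element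
`e_t = κ·[[(1/N − 1)h∥, h⊥], [h⊥ᵀ, H + (h∥/N)·1]]`, `N = n+1`. -/
noncomputable def etMat {n : ℕ} (κ : ℝ) (hpar : ℝ) (hperp : Fin n → ℝ)
    (H : Matrix (Fin n) (Fin n) ℝ) : Matrix (Fin (n + 1)) (Fin (n + 1)) ℝ :=
  κ • Matrix.of (Fin.cons
    (Fin.cons ((1 / ((n : ℝ) + 1) - 1) * hpar) hperp)
    (fun i' => Fin.cons (hperp i')
      (fun j' => H i' j' + (hpar / ((n : ℝ) + 1)) * (if i' = j' then 1 else 0))))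

theorem Matrix.fin_succ_eq_zero_iff {n : ℕ} {R : Type*} [Zero R]
    (M : Matrix (Fin (n + 1)) (Fin (n + 1)) R) :
    M = 0 ↔ M 0 0 = 0 ∧ (∀ j : Fin n, M 0 j.succ = 0) ∧ (∀ i : Fin n, M i.succ 0 = 0) ∧
      ∀ i j : Fin n, M i.succ j.succ = 0 := by
  constructor
  · rintro rfl
    simp
  · rintro ⟨h00, h0s, hs0, hss⟩
    ext i j
    cases i using Fin.cases <;> cases j using Fin.cases <;> simp [*]

lemma pdT_const {m : Type*} (A : Matrix m m ℝ) (t x : ℝ) : pdT (fun _ _ => A) t x = 0 := by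
  ext i j
  simp [pdT]

section Brackets

variable {n : ℕ} (κ a : ℝ) (v w ϖ : Fin n → ℝ) (Θ H : Matrix (Fin n) (Fin n) ℝ)

lemma lieB_omegaMat_etMat_zero_zero :
    lieB (omegaMat v) (etMat κ a w H) 0 0 = 2 * κ * (v ⬝ᵥ w) := by
  simp only [lieB, omegaMat, etMat, one_div, mul_comm, ite_mul, one_mul, zero_mul, smul_of,
    Matrix.sub_apply, mul_apply, of_apply, Fin.cons_zero, Pi.smul_apply, smul_eq_mul, mul_left_comm,
    Fin.sum_univ_succ, mul_zero, Fin.cons_succ, zero_add, mul_neg, Finset.sum_neg_distrib,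
    sub_neg_eq_add, dotProduct, Finset.mul_sum]
  ring_nf
  exact Finset.sum_mul ..

lemma lieB_omegaMat_etMat_zero_succ (j : Fin n) :
    lieB (omegaMat v) (etMat κ a w H) 0 j.succ = κ * (vecMul v H j + a * v j) := by
  simp only [lieB, omegaMat, etMat, one_div, mul_comm, ite_mul, one_mul, zero_mul, smul_of,
    Matrix.sub_apply, mul_apply, of_apply, Fin.cons_zero, Pi.smul_apply, smul_eq_mul, mul_left_comm,
    Fin.sum_univ_succ, Fin.cons_succ, mul_zero, mul_add, mul_ite, Finset.sum_add_distrib,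
    Finset.sum_ite_eq', Finset.mem_univ, if_true, zero_add, Pi.zero_apply, Finset.sum_const_zero,
    add_zero, vecMul, dotProduct, Finset.mul_sum]
  ring

lemma lieB_omegaMat_etMat_succ_zero (hH : Hᵀ = H) (i : Fin n) :
    lieB (omegaMat v) (etMat κ a w H) i.succ 0 = κ * (vecMul v H i + a * v i) := by
  conv_rhs => rw [← hH, vecMul_transpose]
  simp only [lieB, omegaMat, etMat, one_div, mul_ite, mul_one, mul_zero, smul_of, Matrix.sub_apply,
    mul_apply, of_apply, Fin.cons_succ, Pi.smul_apply, smul_eq_mul, Fin.sum_univ_succ, Fin.cons_zero,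
    neg_mul, Pi.zero_apply, zero_mul, Finset.sum_const_zero, add_zero, mul_add, mul_neg, add_mul,
    ite_mul, neg_add_rev, Finset.sum_add_distrib, Finset.sum_neg_distrib, Finset.sum_ite_eq,
    Finset.mem_univ, if_true, zero_add, mulVec, dotProduct, Finset.mul_sum]
  simp only [mul_comm, mul_left_comm]
  ring

lemma lieB_omegaMat_etMat_succ_succ (i j : Fin n) :
    lieB (omegaMat v) (etMat κ a w H) i.succ j.succ = -κ * (v i * w j + w i * v j) := by
  simp only [lieB, omegaMat, etMat, smul_of, Matrix.sub_apply, mul_apply, of_apply, Fin.cons_succ,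
    Pi.smul_apply, smul_eq_mul, Fin.sum_univ_succ, Fin.cons_zero, neg_mul, Pi.zero_apply, zero_mul,
    mul_zero, Finset.sum_const_zero, add_zero]
  ring

lemma lieB_Wmat_Emat_zero_zero : lieB (Wmat ϖ Θ) (Emat n κ) 0 0 = 0 := by
  simp [lieB, Wmat, Emat, mul_diagonal, diagonal_mul]

lemma lieB_Wmat_Emat_zero_succ (j : Fin n) : lieB (Wmat ϖ Θ) (Emat n κ) 0 j.succ = κ * ϖ j := by
  have : (n : ℝ) + 1 ≠ 0 := n.cast_add_one_ne_zero
  simp only [lieB, Wmat, Emat, Algebra.mul_smul_comm, Algebra.smul_mul_assoc, Matrix.sub_apply,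
    Matrix.smul_apply, mul_diagonal, diagonal_mul, of_apply, Fin.cons_zero, Fin.cons_succ,
    smul_eq_mul]
  field_simp
  ring

lemma lieB_Wmat_Emat_succ_zero (i : Fin n) : lieB (Wmat ϖ Θ) (Emat n κ) i.succ 0 = κ * ϖ i := by
  have : (n : ℝ) + 1 ≠ 0 := n.cast_add_one_ne_zero
  simp only [lieB, Wmat, Emat, Algebra.mul_smul_comm, Algebra.smul_mul_assoc, Matrix.sub_apply,
    Matrix.smul_apply, mul_diagonal, diagonal_mul, of_apply, Fin.cons_zero, Fin.cons_succ,
    smul_eq_mul]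
  field_simp
  ring

lemma lieB_Wmat_Emat_succ_succ (i j : Fin n) : lieB (Wmat ϖ Θ) (Emat n κ) i.succ j.succ = 0 := by
  simp [lieB, Wmat, Emat, mul_diagonal, diagonal_mul]

end Brackets

lemma ne_zero_of_sq_mul_eq {n : ℕ} {κ : ℝ} (hκ : κ ^ 2 * n = 2 * (n + 1)) : κ ≠ 0 := by
  rintro rfl
  norm_num at hκ
  linarith

section Torsion

variable {n : ℕ} (κ : ℝ) (v ϖ hperp : ℝ → ℝ → Fin n → ℝ) (hpar : ℝ → ℝ → ℝ)
  (Θ H : ℝ → ℝ → Matrix (Fin n) (Fin n) ℝ) (t x : ℝ)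

noncomputable def torsion : Matrix (Fin (n + 1)) (Fin (n + 1)) ℝ :=
  pdX (fun s y => etMat κ (hpar s y) (hperp s y) (H s y)) t x
    - pdT (fun _ _ => Emat n κ) t x
    + lieB (omegaMat (v t x)) (etMat κ (hpar t x) (hperp t x) (H t x))
    - lieB (Wmat (ϖ t x) (Θ t x)) (Emat n κ)

lemma pdX_etMat_zero_zero :
    pdX (fun s y => etMat κ (hpar s y) (hperp s y) (H s y)) t x 0 0 =
      κ * ((1 / ((n : ℝ) + 1) - 1) * deriv (fun y => hpar t y) x) := by
  simp only [pdX, etMat, of_apply, Matrix.smul_apply, Fin.cons_zero, smul_eq_mul,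
    deriv_const_mul_field]

lemma pdX_etMat_zero_succ (j : Fin n) :
    pdX (fun s y => etMat κ (hpar s y) (hperp s y) (H s y)) t x 0 j.succ =
      κ * deriv (fun y => hperp t y j) x := by
  simp only [pdX, etMat, of_apply, Matrix.smul_apply, Fin.cons_zero, Fin.cons_succ, smul_eq_mul,
    deriv_const_mul_field]

lemma pdX_etMat_succ_zero (i : Fin n) :
    pdX (fun s y => etMat κ (hpar s y) (hperp s y) (H s y)) t x i.succ 0 =
      κ * deriv (fun y => hperp t y i) x := by
  simp only [pdX, etMat, of_apply, Matrix.smul_apply, Fin.cons_zero, Fin.cons_succ, smul_eq_mul,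
    deriv_const_mul_field]

lemma pdX_etMat_succ_succ (i j : Fin n) :
    pdX (fun s y => etMat κ (hpar s y) (hperp s y) (H s y)) t x i.succ j.succ =
      κ * deriv (fun y => H t y i j + hpar t y / ((n : ℝ) + 1) * (if i = j then 1 else 0)) x := by
  simp only [pdX, etMat, of_apply, Matrix.smul_apply, Fin.cons_succ, smul_eq_mul,
    deriv_const_mul_field]

lemma torsion_zero_zero (hκ : κ ^ 2 * n = 2 * (n + 1)) :
    torsion κ v ϖ hperp hpar Θ H t x 0 0 =
      -κ * (2 * (κ ^ 2)⁻¹ * deriv (fun y => hpar t y) x - 2 * (v t x ⬝ᵥ hperp t x)) := by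
  have := ne_zero_of_sq_mul_eq hκ
  simp only [torsion, Matrix.sub_apply, Matrix.add_apply, pdT_const, Matrix.zero_apply,
    pdX_etMat_zero_zero, lieB_omegaMat_etMat_zero_zero, lieB_Wmat_Emat_zero_zero]
  field_simp
  linear_combination (-deriv (fun y => hpar t y) x) * hκ

lemma torsion_zero_succ (j : Fin n) :
    torsion κ v ϖ hperp hpar Θ H t x 0 j.succ =
      -κ * (ϖ t x j - hpar t x * v t x j - deriv (fun y => hperp t y j) x
        - vecMul (v t x) (H t x) j) := by
  simp only [torsion, Matrix.sub_apply, Matrix.add_apply, pdT_const, Matrix.zero_apply,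
    pdX_etMat_zero_succ, lieB_omegaMat_etMat_zero_succ, lieB_Wmat_Emat_zero_succ]
  ring

lemma torsion_succ_zero (hH : (H t x)ᵀ = H t x) (i : Fin n) :
    torsion κ v ϖ hperp hpar Θ H t x i.succ 0 =
      -κ * (ϖ t x i - hpar t x * v t x i - deriv (fun y => hperp t y i) x
        - vecMul (v t x) (H t x) i) := by
  simp only [torsion, Matrix.sub_apply, Matrix.add_apply, pdT_const, Matrix.zero_apply,
    pdX_etMat_succ_zero, lieB_omegaMat_etMat_succ_zero (hH := hH), lieB_Wmat_Emat_succ_zero]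
  ring

lemma torsion_succ_succ (i j : Fin n) :
    torsion κ v ϖ hperp hpar Θ H t x i.succ j.succ =
      -κ * (-deriv (fun y => H t y i j + hpar t y / ((n : ℝ) + 1) * (if i = j then 1 else 0)) x
        + v t x i * hperp t x j + hperp t x i * v t x j) := by
  simp only [torsion, Matrix.sub_apply, Matrix.add_apply, pdT_const, Matrix.zero_apply,
    pdX_etMat_succ_succ, lieB_omegaMat_etMat_succ_succ, lieB_Wmat_Emat_succ_succ]
  ring

end Torsion

lemma sq_mul_eq_of_eq_sqrt {n : ℕ} (hn : 1 ≤ n) {κ : ℝ}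
    (hκ : κ = Real.sqrt (2 * ((n : ℝ) + 1) / (((n : ℝ) + 1) - 1))) :
    κ ^ 2 * n = 2 * (n + 1) := by
  have : (n : ℝ) ≠ 0 := by positivity
  rw [hκ, add_sub_cancel_right, Real.sq_sqrt (by positivity)]
  field_simp

theorem statement_11_general (n : ℕ) (hn : 1 ≤ n) (κ : ℝ)
    (hκ : κ = Real.sqrt (2 * ((n : ℝ) + 1) / (((n : ℝ) + 1) - 1)))
    (v ϖ hperp : ℝ → ℝ → Fin n → ℝ) (hpar : ℝ → ℝ → ℝ)
    (Θ H : ℝ → ℝ → Matrix (Fin n) (Fin n) ℝ)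
    (hHsymm : ∀ t x, (H t x)ᵀ = H t x) :
    (∀ t x : ℝ,
        pdX (fun s y => etMat κ (hpar s y) (hperp s y) (H s y)) t x
          - pdT (fun _ _ => Emat n κ) t x
          + lieB (omegaMat (v t x)) (etMat κ (hpar t x) (hperp t x) (H t x))
          - lieB (Wmat (ϖ t x) (Θ t x)) (Emat n κ) = 0)
    ↔ (∀ t x : ℝ,
        (0 = 2 * (κ ^ 2)⁻¹ * deriv (fun y => hpar t y) x - 2 * (v t x ⬝ᵥ hperp t x)) ∧
        (∀ i, 0 = ϖ t x i - hpar t x * v t x i - deriv (fun y => hperp t y i) x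
            - Matrix.vecMul (v t x) (H t x) i) ∧
        (∀ i j, 0 = -deriv (fun y => H t y i j
              + (hpar t y / ((n : ℝ) + 1)) * (if i = j then 1 else 0)) x
            + v t x i * hperp t x j + hperp t x i * v t x j)) := by
  have hκ2 := sq_mul_eq_of_eq_sqrt hn hκ
  have hκ0 : -κ ≠ 0 := neg_ne_zero.mpr (ne_zero_of_sq_mul_eq hκ2)
  refine forall₂_congr fun t x => ?_
  change torsion κ v ϖ hperp hpar Θ H t x = 0 ↔ _
  simp only [Matrix.fin_succ_eq_zero_iff, torsion_zero_zero (hκ := hκ2),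
    torsion_zero_succ, torsion_succ_zero (hH := hHsymm t x), torsion_succ_succ,
    mul_eq_zero, hκ0, false_or, eq_comm (a := (0 : ℝ))]
  tauto

/-- for `SU(N)/SO(N)` with `N = n+1 ≥ 2` and `κ = √(2N/(N−1))`, with
`ω_x = ω_v`, `ω_t = [[0,ϖ],[−ϖᵀ,Θ]]`, `e_t = κ·[[(1/N−1)h∥, h⊥],[h⊥ᵀ, H+(h∥/N)·1]]`
and `E` constant, the zero-torsion equation `∂_x e_t − ∂_t E + [ω_x, e_t] − [ω_t, E] = 0`
holds identically on `ℝ²` iff the three component equations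
`0 = 2κ⁻²∂_x h∥ − 2 v·h⊥`, `0 = ϖ − h∥v − ∂_x h⊥ − vH`, and
`0 = −∂_x(H + (h∥/N)·1) + v⊗h⊥ + h⊥⊗v` hold identically (Θ does not enter). -/
theorem statement_11 (n : ℕ) (hn : 1 ≤ n) (κ : ℝ)
    (hκ : κ = Real.sqrt (2 * ((n : ℝ) + 1) / (((n : ℝ) + 1) - 1)))
    (v ϖ hperp : ℝ → ℝ → Fin n → ℝ) (hpar : ℝ → ℝ → ℝ)
    (Θ H : ℝ → ℝ → Matrix (Fin n) (Fin n) ℝ)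
    (hΘskew : ∀ t x, (Θ t x)ᵀ = -(Θ t x))
    (hHsymm : ∀ t x, (H t x)ᵀ = H t x) (hHtr : ∀ t x, (H t x).trace = 0)
    (hvdiff : ∀ i, Differentiable ℝ (fun p : ℝ × ℝ => v p.1 p.2 i))
    (hϖdiff : ∀ i, Differentiable ℝ (fun p : ℝ × ℝ => ϖ p.1 p.2 i))
    (hhperpdiff : ∀ i, Differentiable ℝ (fun p : ℝ × ℝ => hperp p.1 p.2 i))
    (hhpardiff : Differentiable ℝ (fun p : ℝ × ℝ => hpar p.1 p.2))
    (hΘdiff : ∀ i j, Differentiable ℝ (fun p : ℝ × ℝ => Θ p.1 p.2 i j))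
    (hHdiff : ∀ i j, Differentiable ℝ (fun p : ℝ × ℝ => H p.1 p.2 i j)) :
    (∀ t x : ℝ,
        pdX (fun s y => etMat κ (hpar s y) (hperp s y) (H s y)) t x
          - pdT (fun _ _ => Emat n κ) t x
          + lieB (omegaMat (v t x)) (etMat κ (hpar t x) (hperp t x) (H t x))
          - lieB (Wmat (ϖ t x) (Θ t x)) (Emat n κ) = 0)
    ↔ (∀ t x : ℝ,
        (0 = 2 * (κ ^ 2)⁻¹ * deriv (fun y => hpar t y) x - 2 * (v t x ⬝ᵥ hperp t x)) ∧
        (∀ i, 0 = ϖ t x i - hpar t x * v t x i - deriv (fun y => hperp t y i) x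
            - Matrix.vecMul (v t x) (H t x) i) ∧
        (∀ i j, 0 = -deriv (fun y => H t y i j
              + (hpar t y / ((n : ℝ) + 1)) * (if i = j then 1 else 0)) x
            + v t x i * hperp t x j + hperp t x i * v t x j)) :=
  statement_11_general n hn κ hκ v ϖ hperp hpar Θ H hHsymm
end

section
/- Let h⊥, v : ℝ → ℝ^{N−1} be differentiable, let H : ℝ → (N−1)×(N−1) symmetric real matrices be differentiable, and set h := tr H. Suppose the −1 flow system for SU(N)/SO(N) holds: h⊥′ = −h·v − vH, h′ = 2 v · h⊥, and H′ = v⊗h⊥ + h⊥⊗v, where vH denotes the row vector (vH)_j = Σ_i v_i H_{ij}. Then the quantity |h⊥|² + (1/2)(h² + tr(H²)) is constant, i.e. its derivative vanishes identically. (This is the conservation law 0 = D_x(|h⊥|² + ½(h² + |𝐡|²)) corresponding to 0 = ∇_x|γ_t|²_g for the wave map flow on SU(N)/SO(N).) -/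
/-!
Differentiating entrywise, the derivative of `|h⊥|² + ½(h² + tr(H²))` is
`2 h⊥·h⊥′ + h h′ + tr(H H′)`. By the flow equations, `2 h⊥·h⊥′ = −2h (v·h⊥) − 2 (vH)·h⊥`,
`h′ = tr H′ = 2 v·h⊥`, and, since `H` is symmetric, `tr(H (v⊗h⊥ + h⊥⊗v)) = 2 (vH)·h⊥`;
the four terms cancel.
-/

open Matrix

section Deriv

variable {𝕜 : Type*} [NontriviallyNormedField 𝕜] {n : Type*} [Fintype n]

theorem hasDerivAt_dotProduct {f g : 𝕜 → n → 𝕜} {f' g' : n → 𝕜} {x : 𝕜}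
    (hf : ∀ i, HasDerivAt (fun y => f y i) (f' i) x)
    (hg : ∀ i, HasDerivAt (fun y => g y i) (g' i) x) :
    HasDerivAt (fun y => f y ⬝ᵥ g y) (f' ⬝ᵥ g x + f x ⬝ᵥ g') x := by
  simp only [dotProduct, ← Finset.sum_add_distrib]
  exact HasDerivAt.fun_sum fun i _ => (hf i).mul (hg i)

theorem hasDerivAt_trace {A : 𝕜 → Matrix n n 𝕜} {A' : Matrix n n 𝕜} {x : 𝕜}
    (hA : ∀ i j, HasDerivAt (fun y => A y i j) (A' i j) x) :
    HasDerivAt (fun y => (A y).trace) A'.trace x :=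
  HasDerivAt.fun_sum fun i _ => hA i i

theorem hasDerivAt_matrix_mul_apply {A B : 𝕜 → Matrix n n 𝕜} {A' B' : Matrix n n 𝕜} {x : 𝕜}
    (hA : ∀ i j, HasDerivAt (fun y => A y i j) (A' i j) x)
    (hB : ∀ i j, HasDerivAt (fun y => B y i j) (B' i j) x) (i j : n) :
    HasDerivAt (fun y => (A y * B y) i j) ((A' * B x + A x * B') i j) x := by
  simp only [Matrix.add_apply, Matrix.mul_apply, ← Finset.sum_add_distrib]
  exact HasDerivAt.fun_sum fun k _ => (hA i k).mul (hB k j)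

end Deriv

section Algebra

variable {R : Type*} [CommRing R] {n : Type*} [Fintype n]

theorem trace_mul_vecMulVec_add_of_transpose_eq {M : Matrix n n R} (hM : Mᵀ = M)
    (a b : n → R) : (M * (vecMulVec b a + vecMulVec a b)).trace = 2 * (b ᵥ* M ⬝ᵥ a) := by
  rw [Matrix.mul_add, mul_vecMulVec, mul_vecMulVec, trace_add, trace_vecMulVec, trace_vecMulVec,
    ← vecMul_transpose, ← vecMul_transpose, hM, dotProduct_comm (a ᵥ* M), ← dotProduct_mulVec,
    ← vecMul_transpose, hM]
  ring

theorem energy_rate_eq_zero_of_minusOneFlow {M : Matrix n n R} (hM : Mᵀ = M) (a b : n → R) :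
    2 * (a ⬝ᵥ (-(M.trace • b) - b ᵥ* M)) + M.trace * (vecMulVec b a + vecMulVec a b).trace
      + (M * (vecMulVec b a + vecMulVec a b)).trace = 0 := by
  rw [trace_mul_vecMulVec_add_of_transpose_eq hM, trace_add, trace_vecMulVec, trace_vecMulVec,
    dotProduct_sub, dotProduct_neg, dotProduct_smul, smul_eq_mul, dotProduct_comm a (b ᵥ* M),
    dotProduct_comm a b]
  ring

end Algebra

theorem statement_17_general (N : ℕ)
    (hperp v : ℝ → Fin (N - 1) → ℝ)
    (H : ℝ → Matrix (Fin (N - 1)) (Fin (N - 1)) ℝ)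
    (hHsymm : ∀ x, (H x)ᵀ = H x)
    (hhperpdiff : ∀ i, Differentiable ℝ (fun x => hperp x i))
    (hHdiff : ∀ i j, Differentiable ℝ (fun x => H x i j))
    (heq1 : ∀ x i, deriv (fun y => hperp y i) x
        = -((H x).trace * v x i) - Matrix.vecMul (v x) (H x) i)
    (heq3 : ∀ x i j, deriv (fun y => H y i j) x = v x i * hperp x j + hperp x i * v x j) :
    ∀ x, deriv (fun y => hperp y ⬝ᵥ hperp y
        + (1 / 2 : ℝ) * ((H y).trace ^ 2 + (H y * H y).trace)) x = 0 := by
  intro x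
  have hp : ∀ i, HasDerivAt (fun y => hperp y i) ((-((H x).trace • v x) - v x ᵥ* H x) i) x :=
    fun i => by simpa [heq1] using (hhperpdiff i x).hasDerivAt
  have hH : ∀ i j, HasDerivAt (fun y => H y i j)
      ((vecMulVec (v x) (hperp x) + vecMulVec (hperp x) (v x)) i j) x :=
    fun i j => by simpa [heq3, vecMulVec_apply] using (hHdiff i j x).hasDerivAt
  have hE := (hasDerivAt_dotProduct hp hp).fun_add
    ((((hasDerivAt_trace hH).fun_pow 2).fun_add
      (hasDerivAt_trace (hasDerivAt_matrix_mul_apply hH hH))).const_mul (1 / 2 : ℝ))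
  rw [hE.deriv, dotProduct_comm _ (hperp x), trace_add _ (H x * _), trace_mul_comm _ (H x)]
  linear_combination energy_rate_eq_zero_of_minusOneFlow (hHsymm x) (hperp x) (v x)

/-- let `h⊥, v : ℝ → ℝ^{N−1}` and `H : ℝ → Sym(N−1)` be differentiable with
`h := tr H`, satisfying the −1 flow system for `SU(N)/SO(N)`: `h⊥′ = −h·v − vH`,
`h′ = 2 v · h⊥`, and `H′ = v⊗h⊥ + h⊥⊗v`.  Then `|h⊥|² + (1/2)(h² + tr(H²))` is constant. -/
theorem statement_17 (N : ℕ) (hN : 2 ≤ N)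
    (hperp v : ℝ → Fin (N - 1) → ℝ)
    (H : ℝ → Matrix (Fin (N - 1)) (Fin (N - 1)) ℝ)
    (hHsymm : ∀ x, (H x)ᵀ = H x)
    (hhperpdiff : ∀ i, Differentiable ℝ (fun x => hperp x i))
    (hvdiff : ∀ i, Differentiable ℝ (fun x => v x i))
    (hHdiff : ∀ i j, Differentiable ℝ (fun x => H x i j))
    (heq1 : ∀ x i, deriv (fun y => hperp y i) x
        = -((H x).trace * v x i) - Matrix.vecMul (v x) (H x) i)
    (heq2 : ∀ x, deriv (fun y => (H y).trace) x = 2 * (v x ⬝ᵥ hperp x))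
    (heq3 : ∀ x i j, deriv (fun y => H y i j) x = v x i * hperp x j + hperp x i * v x j) :
    ∀ x, deriv (fun y => hperp y ⬝ᵥ hperp y
        + (1 / 2 : ℝ) * ((H y).trace ^ 2 + (H y * H y).trace)) x = 0 :=
  statement_17_general N hperp v H hHsymm hhperpdiff hHdiff heq1 heq3
end

section
/- Let N ≥ 2, κ := √(2N/(N−1)), let h, c ∈ ℝ with h + c ≠ 0 and c ≠ 0, and let h⊥ ∈ ℝ^{N−1}. Suppose H := −(h+c)⁻¹·(h⊥⊗h⊥) + c·1 satisfies tr H = h (equivalently |h⊥|² = N·c·(h+c) − (h+c)²), and that the normalization |h⊥|² + (1/2)(h² + tr(H²)) = (2/κ)² holds. Then c² = (2/N)², i.e. c = ±2/N. (This fixes the integration constant in the −1 flow for SU(N)/SO(N) after the conformal scaling |γ_t|_g = 2.) -/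
open Matrix

theorem my_trace_vecMulVec {n : Type*} [Fintype n] (a b : n → ℝ) :
    (vecMulVec a b).trace = a ⬝ᵥ b := by
  simp [Matrix.trace, Matrix.diag, vecMulVec_apply, dotProduct]

theorem my_vecMulVec_mul {n : Type*} [Fintype n] (a b c d : n → ℝ) :
    vecMulVec a b * vecMulVec c d = (b ⬝ᵥ c) • vecMulVec a d := by
  ext i j
  simp only [Matrix.mul_apply, vecMulVec_apply, Matrix.smul_apply, dotProduct,
    Finset.sum_mul, smul_eq_mul]
  exact Finset.sum_congr rfl fun k _ => by ring

/-- let `N ≥ 2`, `κ := √(2N/(N−1))`, `h, c ∈ ℝ` with `h + c ≠ 0` and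
`c ≠ 0`, and `h⊥ ∈ ℝ^{N−1}`.  Suppose `H := −(h+c)⁻¹·(h⊥⊗h⊥) + c·1` satisfies
`tr H = h` (equivalently `|h⊥|² = N·c·(h+c) − (h+c)²`), and that the normalization
`|h⊥|² + (1/2)(h² + tr(H²)) = (2/κ)²` holds.  Then `c² = (2/N)²`. -/
theorem statement_19 (N : ℕ) (hN : 2 ≤ N) (κ : ℝ)
    (hκ : κ = Real.sqrt (2 * (N : ℝ) / ((N : ℝ) - 1)))
    (h c : ℝ) (hhc : h + c ≠ 0) (hc : c ≠ 0)
    (hperp : Fin (N - 1) → ℝ)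
    (H : Matrix (Fin (N - 1)) (Fin (N - 1)) ℝ)
    (hH : H = -(h + c)⁻¹ • vecMulVec hperp hperp
        + c • (1 : Matrix (Fin (N - 1)) (Fin (N - 1)) ℝ))
    (htr : H.trace = h)
    (hnorm : hperp ⬝ᵥ hperp + (1 / 2 : ℝ) * (h ^ 2 + (H * H).trace) = (2 / κ) ^ 2) :
    c ^ 2 = (2 / (N : ℝ)) ^ 2 := by
  have hNR : (2 : ℝ) ≤ (N : ℝ) := by exact_mod_cast hN
  have hn0 : (N : ℝ) ≠ 0 := by linarith
  have hn1 : (N : ℝ) - 1 ≠ 0 := by linarith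
  have hcard : ((N - 1 : ℕ) : ℝ) = (N : ℝ) - 1 := by
    have h1 : (1 : ℕ) ≤ N := by omega
    push_cast [Nat.cast_sub h1]; ring
  -- value of (2/κ)^2
  have hκsq : (2 / κ) ^ 2 = 2 * ((N : ℝ) - 1) / (N : ℝ) := by
    have harg : (0 : ℝ) < 2 * (N : ℝ) / ((N : ℝ) - 1) :=
      div_pos (by linarith) (by linarith)
    have hκ2 : κ ^ 2 = 2 * (N : ℝ) / ((N : ℝ) - 1) := by
      rw [hκ, Real.sq_sqrt harg.le]
    have hκne : κ ≠ 0 := by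
      rw [hκ]; exact (Real.sqrt_pos.mpr harg).ne'
    field_simp [hκne] at hκ2 ⊢
    nlinarith [hκ2]
  set s : ℝ := hperp ⬝ᵥ hperp with hsdef
  have hP : (vecMulVec hperp hperp).trace = s := my_trace_vecMulVec _ _
  have htr' : -(h + c)⁻¹ * s + c * ((N : ℝ) - 1) = h := by
    rw [hH] at htr
    simpa [Matrix.trace_add, Matrix.trace_smul, Matrix.trace_one, hP, hcard,
      smul_eq_mul, Fintype.card_fin] using htr
  have hinv : (h + c) * (h + c)⁻¹ = 1 := mul_inv_cancel₀ hhc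
  have hs : s = (h + c) * (c * ((N : ℝ) - 1) - h) := by
    have h1 : (h + c) * (-(h + c)⁻¹ * s + c * ((N : ℝ) - 1)) = (h + c) * h := by
      rw [htr']
    linear_combination -h1 - s * hinv
  have e1 : (h + c)⁻¹ * s = c * ((N : ℝ) - 1) - h := by
    rw [hs]; field_simp
  -- trace of H^2
  have hHH : (H * H).trace =
      (c * ((N : ℝ) - 1) - h) ^ 2 - 2 * c * (c * ((N : ℝ) - 1) - h)
        + c ^ 2 * ((N : ℝ) - 1) := by
    rw [hH]
    simp only [add_mul, mul_add, Matrix.smul_mul, Matrix.mul_smul, one_mul, mul_one,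
      my_vecMulVec_mul, Matrix.trace_add, Matrix.trace_smul, Matrix.trace_one,
      hP, Fintype.card_fin, hcard, smul_eq_mul, smul_smul, ← hsdef]
    have e2 : ((h + c)⁻¹ * s) ^ 2 = (c * ((N : ℝ) - 1) - h) ^ 2 := by rw [e1]
    linear_combination e2 - 2 * c * e1
  rw [hHH, hκsq, hs] at hnorm
  have key : c ^ 2 * (N : ℝ) ^ 2 = 4 := by
    have h2 : ((N : ℝ) - 1) * (c ^ 2 * (N : ℝ) ^ 2) = ((N : ℝ) - 1) * 4 := by
      have := hnorm
      field_simp at this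
      nlinarith [this]
    exact mul_left_cancel₀ hn1 h2
  field_simp
  linarith [key]
end
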